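/- arXiv:2212.02929 — 6 statements merged into one kernel-verified Lean document; each statement's English description precedes it below -/
import Mathlib

section
/- Let x ∈ ℝⁿ with ‖x‖₁ > s for some s > 0. Then there exists λ > 0 such that z defined by z_i = sgn(x_i)·max(|x_i| - λ, 0) satisfies ‖z‖₁ = s, and this z is the Euclidean projection of x onto the ℓ1-ball {z : ‖z‖₁ ≤ s}, i.e., it minimizes ‖z - x‖₂² subject to ‖z‖₁ ≤ s. -/
lemma soft_pointwise (a w lam : ℝ) (hlam : 0 < lam) :
    (w - Real.sign a * max (|a| - lam) 0) * (a - Real.sign a * max (|a| - lam) 0)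
      ≤ lam * (|w| - |Real.sign a * max (|a| - lam) 0|) := by
  rcases le_or_gt (|a|) lam with h | h
  · have hm : max (|a| - lam) 0 = 0 := max_eq_right (by linarith)
    rw [hm]
    simp only [mul_zero, sub_zero, abs_zero]
    have h1 : w * a ≤ |w| * |a| := by
      calc w * a ≤ |w * a| := le_abs_self _
        _ = |w| * |a| := abs_mul _ _
    nlinarith [abs_nonneg w, abs_nonneg a]
  · have ha : a ≠ 0 := by
      intro h0; rw [h0] at h; simp at h; linarith
    have hm : max (|a| - lam) 0 = |a| - lam := max_eq_left (by linarith)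
    have hsa : Real.sign a * |a| = a := by
      rcases lt_or_gt_of_ne ha with h1 | h1
      · rw [Real.sign_of_neg h1, abs_of_neg h1]; ring
      · rw [Real.sign_of_pos h1, abs_of_pos h1]; ring
    have hs2 : Real.sign a * Real.sign a = 1 := by
      rcases lt_or_gt_of_ne ha with h1 | h1
      · rw [Real.sign_of_neg h1]; norm_num
      · rw [Real.sign_of_pos h1]; norm_num
    have habs : |Real.sign a| = 1 := by
      rcases lt_or_gt_of_ne ha with h1 | h1
      · rw [Real.sign_of_neg h1]; norm_num
      · rw [Real.sign_of_pos h1]; norm_num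
    have hz : |Real.sign a * max (|a| - lam) 0| = |a| - lam := by
      rw [abs_mul, habs, one_mul, hm, abs_of_nonneg (by linarith)]
    rw [hz, hm]
    have hws : w * Real.sign a ≤ |w| := by
      calc w * Real.sign a ≤ |w * Real.sign a| := le_abs_self _
        _ = |w| * |Real.sign a| := abs_mul _ _
        _ = |w| := by rw [habs, mul_one]
    have h1 : a - Real.sign a * (|a| - lam) = Real.sign a * lam := by
      linear_combination -hsa
    rw [h1]
    have h2 : (w - Real.sign a * (|a| - lam)) * (Real.sign a * lam)
        = lam * (w * Real.sign a - (|a| - lam)) := by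
      linear_combination lam * (lam - |a|) * hs2
    rw [h2]
    have : w * Real.sign a - (|a| - lam) ≤ |w| - (|a| - lam) := by linarith
    exact mul_le_mul_of_nonneg_left this (le_of_lt hlam)

/-- If `‖x‖₁ > s > 0`, then there is a threshold `λ > 0` such that the soft-thresholded
vector `z_i = sgn(x_i) * max (|x_i| - λ) 0` satisfies `‖z‖₁ = s` and `z` is the Euclidean
projection of `x` onto the `ℓ1`-ball of radius `s`. -/
theorem soft_threshold_is_l1_projection {n : ℕ} (x : Fin n → ℝ) (s : ℝ) (hs : 0 < s)
    (hx : s < ∑ i, |x i|) :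
    ∃ lam : ℝ, 0 < lam ∧
      (fun z : Fin n → ℝ =>
        (∑ i, |z i|) = s ∧
        ∀ w : Fin n → ℝ, (∑ i, |w i|) ≤ s →
          ∑ i, (z i - x i) ^ 2 ≤ ∑ i, (w i - x i) ^ 2)
      (fun i => Real.sign (x i) * max (|x i| - lam) 0) := by
  set M : ℝ := ∑ i, |x i| with hM
  have hMpos : 0 < M := lt_trans hs hx
  set f : ℝ → ℝ := fun t => ∑ i, max (|x i| - t) 0 with hf
  have hcont : Continuous f := by
    apply continuous_finset_sum
    intro i _
    exact (continuous_const.sub continuous_id).max continuous_const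
  have hf0 : f 0 = M := by
    simp only [hf, sub_zero]
    exact Finset.sum_congr rfl fun i _ => max_eq_left (abs_nonneg _)
  have hfM : f M = 0 := by
    apply Finset.sum_eq_zero
    intro i _
    apply max_eq_right
    have : |x i| ≤ M := Finset.single_le_sum (fun j _ => abs_nonneg (x j)) (Finset.mem_univ i)
    linarith
  have hsub : Set.Icc (f M) (f 0) ⊆ f '' Set.Icc 0 M :=
    intermediate_value_Icc' (le_of_lt hMpos) hcont.continuousOn
  have hmem : s ∈ Set.Icc (f M) (f 0) := by
    rw [hfM, hf0]; exact ⟨le_of_lt hs, le_of_lt hx⟩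
  obtain ⟨lam, hlamIcc, hflam⟩ := hsub hmem
  have hlampos : 0 < lam := by
    rcases lt_or_eq_of_le hlamIcc.1 with h | h
    · exact h
    · exfalso; rw [← h] at hflam; rw [hf0] at hflam; linarith
  refine ⟨lam, hlampos, ?_, ?_⟩
  · -- ∑ |z i| = s
    have : ∀ i : Fin n, |Real.sign (x i) * max (|x i| - lam) 0| = max (|x i| - lam) 0 := by
      intro i
      by_cases hxi : x i = 0
      · rw [hxi]; simp; linarith
      · have habs : |Real.sign (x i)| = 1 := by
          rcases lt_or_gt_of_ne hxi with h1 | h1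
          · rw [Real.sign_of_neg h1]; norm_num
          · rw [Real.sign_of_pos h1]; norm_num
        rw [abs_mul, habs, one_mul, abs_of_nonneg (le_max_right _ _)]
    simp only [this]
    exact hflam
  · -- optimality
    intro w hw
    set z : Fin n → ℝ := fun i => Real.sign (x i) * max (|x i| - lam) 0 with hz
    have hzsum : (∑ i, |z i|) = s := by
      have : ∀ i : Fin n, |z i| = max (|x i| - lam) 0 := by
        intro i
        by_cases hxi : x i = 0
        · simp only [hz, hxi]; simp; linarith
        · have habs : |Real.sign (x i)| = 1 := by
            rcases lt_or_gt_of_ne hxi with h1 | h1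
            · rw [Real.sign_of_neg h1]; norm_num
            · rw [Real.sign_of_pos h1]; norm_num
          simp only [hz]
          rw [abs_mul, habs, one_mul, abs_of_nonneg (le_max_right _ _)]
      simp only [this]; exact hflam
    have key : (∑ i, (w i - z i) * (x i - z i)) ≤ 0 := by
      calc (∑ i, (w i - z i) * (x i - z i))
          ≤ ∑ i, lam * (|w i| - |z i|) := by
            apply Finset.sum_le_sum
            intro i _
            exact soft_pointwise (x i) (w i) lam hlampos
        _ = lam * ((∑ i, |w i|) - ∑ i, |z i|) := by
            rw [← Finset.sum_sub_distrib, Finset.mul_sum]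
        _ ≤ 0 := by
            rw [hzsum]
            have : (∑ i, |w i|) - s ≤ 0 := by linarith
            exact mul_nonpos_of_nonneg_of_nonpos (le_of_lt hlampos) this
    have expand : (∑ i, (w i - x i) ^ 2) - (∑ i, (z i - x i) ^ 2)
        = (∑ i, (w i - z i) ^ 2) - 2 * ∑ i, (w i - z i) * (x i - z i) := by
      rw [← Finset.sum_sub_distrib, Finset.mul_sum, ← Finset.sum_sub_distrib]
      apply Finset.sum_congr rfl
      intro i _
      ring
    have hsq : 0 ≤ ∑ i, (w i - z i) ^ 2 :=
      Finset.sum_nonneg fun i _ => sq_nonneg _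
    linarith
end

section
/- Let x ∈ ℝⁿ have all coordinates nonnegative and sorted in descending order x₁ ≥ x₂ ≥ ... ≥ xₙ ≥ 0, with ∑ᵢ xᵢ > s > 0. Let M = max{ j : x_j - (1/j)(∑_{i=1}^j x_i - s) > 0 } and λ = (1/M)(∑_{i=1}^M x_i - s). Then the vector z with z_i = max(x_i - λ, 0) satisfies ∑ᵢ z_i = s and z is the projection of x onto the simplex {z : z ≥ 0, ∑ᵢ z_i ≤ s}. -/
open Finset in
/-- Projection onto the positive simplex (Duchi et al. 2008): for sorted nonnegative
`x` with `∑ x > s > 0`, with `M` the largest index `j` such that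
`x_j - (1/j)(∑_{i=1}^j x_i - s) > 0` and `λ = (1/M)(∑_{i=1}^M x_i - s)`, the vector
`z_i = max (x_i - λ) 0` satisfies `∑ z = s` and is the projection of `x` onto
`{z : z ≥ 0, ∑ z ≤ s}`. -/
theorem simplex_projection {n : ℕ} (x : ℕ → ℝ) (s : ℝ) (hs : 0 < s)
    (hnonneg : ∀ i < n, 0 ≤ x i)
    (hsorted : ∀ i j, i ≤ j → j < n → x j ≤ x i)
    (hsum : s < ∑ i ∈ range n, x i)
    (M : ℕ) (hM1 : 1 ≤ M) (hMn : M ≤ n)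
    (hMcond : x (M - 1) - (1 / (M : ℝ)) * ((∑ i ∈ range M, x i) - s) > 0)
    (hMmax : ∀ j, 1 ≤ j → j ≤ n →
      x (j - 1) - (1 / (j : ℝ)) * ((∑ i ∈ range j, x i) - s) > 0 → j ≤ M)
    (lam : ℝ) (hlam : lam = (1 / (M : ℝ)) * ((∑ i ∈ range M, x i) - s))
    (z : ℕ → ℝ) (hz : ∀ i, z i = max (x i - lam) 0) :
    (∑ i ∈ range n, z i) = s ∧
      ∀ w : ℕ → ℝ, (∀ i < n, 0 ≤ w i) → (∑ i ∈ range n, w i) ≤ s →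
        ∑ i ∈ range n, (z i - x i) ^ 2 ≤ ∑ i ∈ range n, (w i - x i) ^ 2 := by
  have hMR : (0:ℝ) < (M:ℝ) := by exact_mod_cast hM1
  set S := ∑ i ∈ range M, x i with hS
  have hM1n : M - 1 < n := by omega
  have hlamlt : lam < x (M-1) := by rw [hlam]; linarith [hMcond]
  have hzlt : ∀ i < M, z i = x i - lam := by
    intro i hi
    have hx : x (M-1) ≤ x i := hsorted i (M-1) (by omega) hM1n
    rw [hz]; exact max_eq_left (by linarith)
  have hMlam : (M:ℝ) * lam = S - s := by
    rw [hlam]; field_simp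
  have hxMlam : ∀ i, M ≤ i → i < n → x i ≤ lam := by
    intro i hMi hin
    have hMn' : M < n := lt_of_le_of_lt hMi hin
    have hxM : x i ≤ x M := hsorted M i hMi hin
    by_contra h
    push_neg at h
    have hlt : lam < x M := lt_of_lt_of_le h hxM
    have hcond : x ((M+1) - 1) - (1 / ((M+1:ℕ) : ℝ)) * ((∑ i ∈ range (M+1), x i) - s) > 0 := by
      simp only [Nat.add_sub_cancel, sum_range_succ, ← hS]
      have hkey : (1:ℝ)/((M+1:ℕ):ℝ) * ((S + x M) - s) < x M := by
        rw [div_mul_eq_mul_div, div_lt_iff₀ (by positivity)]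
        push_cast
        nlinarith [hMlam]
      linarith
    have := hMmax (M+1) (by omega) (by omega) hcond
    omega
  have hzero : ∀ i ∈ Ico M n, z i = 0 := by
    intro i hi
    rw [mem_Ico] at hi
    rw [hz]
    exact max_eq_right (by linarith [hxMlam i hi.1 hi.2])
  have hsumM : ∑ i ∈ range M, z i = s := by
    rw [sum_congr rfl (fun i hi => hzlt i (mem_range.mp hi)), sum_sub_distrib,
      sum_const, card_range, nsmul_eq_mul, ← hS]
    linarith [hMlam]
  have hsumz : ∑ i ∈ range n, z i = s := by
    rw [← sum_range_add_sum_Ico _ hMn, hsumM, sum_eq_zero hzero, add_zero]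
  have hlam0 : 0 ≤ lam := by
    rcases eq_or_lt_of_le hMn with heq | hlt
    · rw [hlam]
      have : s < S := by rw [hS, heq]; exact hsum
      exact mul_nonneg (by positivity) (by linarith)
    · exact le_trans (hnonneg M hlt) (hxMlam M le_rfl hlt)
  refine ⟨hsumz, fun w hw hws => ?_⟩
  have hw_split : (∑ i ∈ range M, w i) + ∑ i ∈ Ico M n, w i = ∑ i ∈ range n, w i :=
    sum_range_add_sum_Ico _ hMn
  have hT : 0 ≤ ∑ i ∈ range n, (w i - z i) * (z i - x i) := by
    rw [← sum_range_add_sum_Ico _ hMn]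
    have h1 : ∑ i ∈ range M, (w i - z i) * (z i - x i)
        = -lam * ((∑ i ∈ range M, w i) - s) := by
      have hc : ∀ i ∈ range M, (w i - z i) * (z i - x i) = -lam * w i - -lam * z i := by
        intro i hi; rw [hzlt i (mem_range.mp hi)]; ring
      rw [sum_congr rfl hc, sum_sub_distrib, ← mul_sum, ← mul_sum, hsumM]
      ring
    have h2 : -lam * (∑ i ∈ Ico M n, w i) ≤ ∑ i ∈ Ico M n, (w i - z i) * (z i - x i) := by
      rw [mul_sum]
      refine sum_le_sum fun i hi => ?_
      have hz0 := hzero i hi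
      rw [mem_Ico] at hi
      rw [hz0]
      have hwi : 0 ≤ w i := hw i hi.2
      have hxi := hxMlam i hi.1 hi.2
      nlinarith
    have hfin : 0 ≤ lam * (s - ∑ i ∈ range n, w i) :=
      mul_nonneg hlam0 (by linarith)
    nlinarith [h1, h2, hfin, hw_split]
  have hsqnn : 0 ≤ ∑ i ∈ range n, (w i - z i)^2 :=
    sum_nonneg fun i _ => sq_nonneg _
  have hdiff : ∑ i ∈ range n, (w i - x i)^2 - ∑ i ∈ range n, (z i - x i)^2
      = 2 * (∑ i ∈ range n, (w i - z i) * (z i - x i)) + ∑ i ∈ range n, (w i - z i)^2 := by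
    rw [← sum_sub_distrib, mul_sum, ← sum_add_distrib]
    exact sum_congr rfl fun i _ => by ring
  linarith [hT, hsqnn, hdiff]
end

section
/- Suppose A ∈ ℝ^{n×n} has all eigenvalues with negative real part. Then for any symmetric positive semidefinite Q, the Lyapunov equation AᵀP + PA + Q = 0 has a unique solution P, and P = ∫₀^∞ exp(Aᵀt)·Q·exp(At) dt; moreover P is symmetric positive semidefinite, and if Q is positive definite then so is P. -/
/-!
Write `S t = exp (t • Aᵀ) * Q * exp (t • A)`. Then `S' = Aᵀ S + S A`, so once `S` decays
exponentially, integrating over `(0, ∞)` gives `Aᵀ P + P A = S ∞ - S 0 = -Q`. If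
`Aᵀ D + D A = 0`, the same computation shows that `exp (t • Aᵀ) * D * exp (t • A)` is constant,
and it tends to `0`, so `D = 0`: the solution is unique. The decay comes from Gelfand's formula:
every eigenvalue of `exp A` is `exp μ` for an eigenvalue `μ` of `A`, so the spectral radius of
`exp A` is `< 1` and some power `exp (k • A)` has norm `< 1`. Finally `S t` is the congruence
`(exp (t • A))ᵀ Q exp (t • A)` of `Q` by an invertible matrix, so `P` inherits semidefiniteness
and definiteness from `Q`.
-/

open Filter MeasureTheory NormedSpace Topology Asymptotics

theorem norm_mul_pow_le_mul_norm_pow {R : Type*} [NormedRing R] (y x : R) (m : ℕ) :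
    ‖y * x ^ m‖ ≤ ‖y‖ * ‖x‖ ^ m := by
  induction m with
  | zero => simp
  | succ m ih =>
    rw [pow_succ, ← mul_assoc, pow_succ, ← mul_assoc]
    exact (norm_mul_le _ _).trans (mul_le_mul_of_nonneg_right ih (norm_nonneg x))

theorem spectrum.exists_norm_pow_lt_one_of_spectralRadius_lt_one {A : Type*} [NormedRing A]
    [NormedAlgebra ℂ A] [CompleteSpace A] {a : A} (ha : spectralRadius ℂ a < 1) :
    ∃ k : ℕ, 0 < k ∧ ‖a ^ k‖ < 1 := by
  obtain ⟨k, hk, hk0⟩ := ((pow_nnnorm_pow_one_div_tendsto_nhds_spectralRadius a).eventually_lt_const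
    ha |>.and (eventually_gt_atTop 0)).exists
  refine ⟨k, hk0, ?_⟩
  by_contra! h
  exact hk.not_ge (ENNReal.one_le_rpow (by exact_mod_cast h) (by positivity))

def IsExpStable {𝔸 : Type*} [NormedRing 𝔸] [NormedAlgebra ℝ 𝔸] (a : 𝔸) : Prop :=
  ∃ ε > 0, (fun t : ℝ => exp (t • a)) =O[atTop] fun t => Real.exp (-ε * t)

section ExpStable

variable {𝔸 : Type*} [NormedRing 𝔸] [NormedAlgebra ℝ 𝔸]

theorem isExpStable_of_norm_exp_smul_lt_one [CompleteSpace 𝔸] {a : 𝔸} {T : ℝ} (hT : 0 < T)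
    (ha : ‖exp (T • a)‖ < 1) : IsExpStable a := by
  let +nondep : NormedAlgebra ℚ 𝔸 := .restrictScalars ℚ ℝ 𝔸
  -- `θ ≥ 1 / 2` keeps `log θ` finite even if `exp (T • a) = 0` (in the trivial algebra)
  set θ := max ‖exp (T • a)‖ (1 / 2)
  have hθ0 : 0 < θ := lt_max_of_lt_right (by norm_num)
  have hθ1 : θ < 1 := max_lt ha (by norm_num)
  obtain ⟨M, hM⟩ := (isCompact_Icc (a := (0 : ℝ)) (b := T)).exists_bound_of_continuousOn
    (differentiable_exp_smul_const ℝ a).continuous.continuousOn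
  have hM0 : 0 ≤ M := (norm_nonneg _).trans (hM 0 ⟨le_rfl, hT.le⟩)
  refine ⟨-Real.log θ / T, div_pos (neg_pos.2 (Real.log_neg hθ0 hθ1)) hT,
    IsBigO.of_bound (M / θ) ?_⟩
  filter_upwards [eventually_ge_atTop 0] with t ht
  set m := ⌊t / T⌋₊
  have hmT : m * T ≤ t := (le_div_iff₀ hT).1 (Nat.floor_le (div_nonneg ht hT.le))
  have hm : t / T - 1 ≤ m := by linarith [Nat.lt_floor_add_one (t / T)]
  have hs : t - m * T ∈ Set.Icc 0 T := ⟨by linarith, by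
    have := (div_lt_iff₀ hT).1 (Nat.lt_floor_add_one (t / T)); linarith⟩
  have hsplit : exp (t • a) = exp ((t - m * T) • a) * exp (T • a) ^ m := by
    rw [← exp_nsmul, ← exp_add_of_commute ((Commute.refl a).smul_left _ |>.smul_right _
      |>.smul_right _), ← Nat.cast_smul_eq_nsmul ℝ, smul_smul, ← add_smul]
    ring_nf
  rw [Real.norm_eq_abs, abs_of_pos (Real.exp_pos _), hsplit]
  calc ‖exp ((t - m * T) • a) * exp (T • a) ^ m‖
      ≤ M * θ ^ m := (norm_mul_pow_le_mul_norm_pow _ _ _).trans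
        (mul_le_mul (hM _ hs) (pow_le_pow_left₀ (norm_nonneg _) (le_max_left _ _) _)
          (by positivity) hM0)
    _ ≤ M * θ ^ (t / T - 1) := by
      rw [← Real.rpow_natCast]
      exact mul_le_mul_of_nonneg_left (Real.rpow_le_rpow_of_exponent_ge hθ0 hθ1.le hm) hM0
    _ = M / θ * Real.exp (-(-Real.log θ / T) * t) := by
      rw [Real.rpow_sub hθ0, Real.rpow_one, Real.rpow_def_of_pos hθ0]
      field_simp

/-- The solution of `X' = b * X + X * a`, `X 0 = x`. -/
noncomputable def sylvesterFlow (a b x : 𝔸) (t : ℝ) : 𝔸 :=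
  exp (t • b) * x * exp (t • a)

variable (a b x : 𝔸)

@[simp]
theorem sylvesterFlow_zero : sylvesterFlow a b x 0 = x := by
  simp [sylvesterFlow]

theorem sylvesterFlow_mul_add_mul (t : ℝ) :
    sylvesterFlow a b (b * x + x * a) t =
      b * sylvesterFlow a b x t + sylvesterFlow a b x t * a := by
  let +nondep : NormedAlgebra ℚ 𝔸 := .restrictScalars ℚ ℝ 𝔸
  have hb : Commute b (exp (t • b)) := ((Commute.refl b).smul_right t).exp_right
  have ha : Commute (exp (t • a)) a := ((Commute.refl a).smul_left t).exp_left
  simp only [sylvesterFlow]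
  rw [mul_add, add_mul, ← mul_assoc _ b, ← hb.eq, ← mul_assoc _ x a, mul_assoc (_ * x) a, ← ha.eq]
  noncomm_ring

theorem hasDerivAt_sylvesterFlow [CompleteSpace 𝔸] (t : ℝ) :
    HasDerivAt (sylvesterFlow a b x) (sylvesterFlow a b (b * x + x * a) t) t := by
  refine (((hasDerivAt_exp_smul_const b t).mul_const x).mul
    (hasDerivAt_exp_smul_const' a t)).congr_deriv ?_
  simp only [sylvesterFlow]
  noncomm_ring

theorem continuous_sylvesterFlow [CompleteSpace 𝔸] : Continuous (sylvesterFlow a b x) :=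
  continuous_iff_continuousAt.2 fun t => (hasDerivAt_sylvesterFlow a b x t).continuousAt

namespace IsExpStable

variable {a b}

theorem isBigO_sylvesterFlow (ha : IsExpStable a) (hb : IsExpStable b) :
    ∃ ε > 0, sylvesterFlow a b x =O[atTop] fun t => Real.exp (-ε * t) := by
  obtain ⟨εa, hεa, ha⟩ := ha
  obtain ⟨εb, hεb, hb⟩ := hb
  refine ⟨εb + εa, by positivity, ((hb.mul (isBigO_const_const x one_ne_zero atTop)).mul ha
    |>.congr_right fun t => ?_)⟩
  rw [mul_one, ← Real.exp_add]
  ring_nf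

theorem tendsto_sylvesterFlow (ha : IsExpStable a) (hb : IsExpStable b) :
    Tendsto (sylvesterFlow a b x) atTop (𝓝 0) := by
  obtain ⟨ε, hε, hO⟩ := ha.isBigO_sylvesterFlow x hb
  exact hO.trans_tendsto <| Real.tendsto_exp_atBot.comp <|
    tendsto_id.const_mul_atTop_of_neg (neg_lt_zero.2 hε)

variable [CompleteSpace 𝔸]

theorem integrableOn_sylvesterFlow (ha : IsExpStable a) (hb : IsExpStable b) :
    IntegrableOn (sylvesterFlow a b x) (Set.Ioi 0) := by
  obtain ⟨ε, hε, hO⟩ := ha.isBigO_sylvesterFlow x hb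
  exact ((continuous_sylvesterFlow a b x).continuousOn.locallyIntegrableOn measurableSet_Ici
    |>.integrableOn_of_isBigO_atTop hO ⟨Set.Ioi 0, Ioi_mem_atTop 0, exp_neg_integrableOn_Ioi 0 hε⟩)
    |>.mono_set Set.Ioi_subset_Ici_self

theorem integral_sylvesterFlow_solves (ha : IsExpStable a) (hb : IsExpStable b) :
    let p := ∫ t in Set.Ioi 0, sylvesterFlow a b x t
    b * p + p * a + x = 0 := by
  intro p
  have hint := ha.integrableOn_sylvesterFlow x hb
  have hFTC := integral_Ioi_of_hasDerivAt_of_tendsto'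
    (fun t _ => (hasDerivAt_sylvesterFlow a b x t).congr_deriv (sylvesterFlow_mul_add_mul a b x t))
    ((hint.const_mul b).add (hint.mul_const a)) (ha.tendsto_sylvesterFlow x hb)
  rw [integral_add (hint.const_mul b) (hint.mul_const a), integral_const_mul_of_integrable hint,
    integral_mul_const_of_integrable hint, sylvesterFlow_zero, zero_sub] at hFTC
  rw [hFTC, neg_add_cancel]

theorem eq_zero_of_sylvester (ha : IsExpStable a) (hb : IsExpStable b) {d : 𝔸}
    (hd : b * d + d * a = 0) : d = 0 := by
  have hderiv (t : ℝ) : HasDerivAt (sylvesterFlow a b d) 0 t := by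
    simpa [hd, sylvesterFlow] using hasDerivAt_sylvesterFlow a b d t
  have hconst (t : ℝ) : sylvesterFlow a b d t = d := by
    simpa using is_const_of_deriv_eq_zero (fun t => (hderiv t).differentiableAt)
      (fun t => (hderiv t).deriv) t 0
  simpa only [funext hconst, tendsto_const_nhds_iff] using ha.tendsto_sylvesterFlow d hb

end IsExpStable

end ExpStable

namespace Matrix

-- The Frobenius norm is submultiplicative and invariant under `ᵀ` and under `map ofReal`.
open scoped Matrix.Norms.Frobenius

section Exp

variable {ι : Type*} [Fintype ι] [DecidableEq ι]

theorem pow_mulVec_of_mulVec_eq_smul {M : Matrix ι ι ℂ} {μ : ℂ} {v : ι → ℂ}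
    (hv : M *ᵥ v = μ • v) (k : ℕ) : M ^ k *ᵥ v = μ ^ k • v := by
  induction k with
  | zero => simp
  | succ k ih => rw [pow_succ', ← mulVec_mulVec, ih, mulVec_smul, hv, smul_smul, pow_succ]

theorem exp_mulVec_of_mulVec_eq_smul {M : Matrix ι ι ℂ} {μ : ℂ} {v : ι → ℂ}
    (hv : M *ᵥ v = μ • v) : exp M *ᵥ v = Complex.exp μ • v := by
  let L : Matrix ι ι ℂ →L[ℂ] ι → ℂ :=
    (LinearMap.applyₗ v ∘ₗ (toLin' : Matrix ι ι ℂ ≃ₗ[ℂ] _).toLinearMap).toContinuousLinearMap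
  calc exp M *ᵥ v = L (∑' k : ℕ, (k.factorial⁻¹ : ℂ) • M ^ k) := by rw [exp_eq_tsum ℂ]; rfl
    _ = ∑' k : ℕ, (k.factorial⁻¹ : ℂ) • μ ^ k • v := by
      rw [L.map_tsum (expSeries_summable' M)]
      exact tsum_congr fun k => by
        rw [← pow_mulVec_of_mulVec_eq_smul hv, ← smul_mulVec]; rfl
    _ = Complex.exp μ • v := by
      rw [Complex.exp_eq_exp_ℂ, exp_eq_tsum ℂ, ← Summable.tsum_smul_const]
      · simp [smul_smul]
      · simpa [smul_eq_mul] using expSeries_summable' (𝕂 := ℂ) μ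

theorem exists_mem_spectrum_exp_eq {M : Matrix ι ι ℂ} {z : ℂ} (hz : z ∈ spectrum ℂ (exp M)) :
    ∃ μ ∈ spectrum ℂ M, Complex.exp μ = z := by
  set f : Module.End ℂ (ι → ℂ) := toLin' M
  set g : Module.End ℂ (ι → ℂ) := toLin' (exp M)
  have hg : g.HasEigenvalue z := Module.End.hasEigenvalue_iff_mem_spectrum.2 <| by
    rwa [spectrum_toLin']
  have hgf : Commute g f := ((Commute.refl M).exp_left).map toLinAlgEquiv'
  have hmaps : Set.MapsTo f (g.eigenspace z) (g.eigenspace z) := by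
    simpa [Module.End.eigenspace_def] using Module.End.mapsTo_genEigenspace_of_comm hgf z 1
  have : Nontrivial (g.eigenspace z) := Submodule.nontrivial_iff_ne_bot.2 hg
  obtain ⟨μ, hμ⟩ := Module.End.exists_eigenvalue (f.restrict hmaps)
  obtain ⟨⟨w, hwz⟩, hw⟩ := hμ.exists_hasEigenvector
  have hMw : M *ᵥ w = μ • w := congrArg Subtype.val hw.apply_eq_smul
  have hw0 : w ≠ 0 := fun h => hw.2 (Subtype.ext h)
  refine ⟨μ, ?_, ?_⟩
  · rw [← spectrum_toLin', ← Module.End.hasEigenvalue_iff_mem_spectrum]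
    exact Module.End.hasEigenvalue_of_hasEigenvector ⟨Module.End.mem_eigenspace_iff.2 hMw, hw0⟩
  · have hexp : exp M *ᵥ w = z • w := Module.End.mem_eigenspace_iff.1 hwz
    rw [exp_mulVec_of_mulVec_eq_smul hMw] at hexp
    exact smul_left_injective ℂ hw0 hexp

theorem spectralRadius_exp_lt_one {M : Matrix ι ι ℂ} (hM : ∀ μ ∈ spectrum ℂ M, μ.re < 0) :
    spectralRadius ℂ (exp M) < 1 := by
  rcases (spectrum ℂ (exp M)).eq_empty_or_nonempty with h | h
  · simp [spectralRadius, h]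
  · refine ENNReal.coe_one ▸ spectrum.spectralRadius_lt_of_forall_lt_of_nonempty h fun z hz => ?_
    obtain ⟨μ, hμ, rfl⟩ := exists_mem_spectrum_exp_eq hz
    rw [← NNReal.coe_lt_coe, coe_nnnorm, Complex.norm_exp, NNReal.coe_one, Real.exp_lt_one_iff]
    exact hM μ hμ

theorem exp_map_ofReal (A : Matrix ι ι ℝ) :
    exp (A.map (Complex.ofReal : ℝ → ℂ)) = (exp A).map (Complex.ofReal : ℝ → ℂ) :=
  (map_exp (Complex.ofRealHom.mapMatrix (m := ι))
    (continuous_id.matrix_map Complex.continuous_ofReal) A).symm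

theorem isExpStable_of_forall_re_neg (A : Matrix ι ι ℝ)
    (hA : ∀ μ ∈ spectrum ℂ (A.map (Complex.ofReal : ℝ → ℂ)), μ.re < 0) : IsExpStable A := by
  have hρ := spectralRadius_exp_lt_one hA
  obtain ⟨k, hk0, hk⟩ := spectrum.exists_norm_pow_lt_one_of_spectralRadius_lt_one hρ
  have hkA : ‖exp ((k : ℝ) • A)‖ < 1 := by
    have hmap : k • A.map (Complex.ofReal : ℝ → ℂ) = (k • A).map Complex.ofReal :=
      (map_nsmul (Complex.ofRealHom.mapMatrix (m := ι)) k A).symm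
    rwa [← exp_nsmul, hmap, exp_map_ofReal, frobenius_norm_map_eq _ _ Complex.norm_real,
      ← Nat.cast_smul_eq_nsmul ℝ] at hk
  exact isExpStable_of_norm_exp_smul_lt_one (Nat.cast_pos.2 hk0) hkA

theorem IsExpStable.transpose {A : Matrix ι ι ℝ} (hA : IsExpStable A) : IsExpStable Aᵀ := by
  obtain ⟨ε, hε, hO⟩ := hA
  refine ⟨ε, hε, IsBigO.of_norm_left (hO.norm_left.congr_left fun t => ?_)⟩
  show ‖exp (t • A)‖ = ‖exp (t • Aᵀ)‖
  rw [← transpose_smul, exp_transpose, frobenius_norm_transpose]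

theorem exp_smul_transpose (A : Matrix ι ι ℝ) (t : ℝ) : exp (t • Aᵀ) = (exp (t • A))ᴴ := by
  rw [← transpose_smul, exp_transpose, conjTranspose_eq_transpose_of_trivial]

end Exp

section Integral

variable {ι X : Type*} [MeasurableSpace X] {μ : Measure X}

theorem isHermitian_integral {f : X → Matrix ι ι ℝ} (h : ∀ x, (f x).IsHermitian) :
    (of fun i j => ∫ x, f x i j ∂μ).IsHermitian := by
  ext i j
  simp only [conjTranspose_apply, star_trivial, of_apply]
  exact integral_congr_ae (ae_of_all _ fun x => (h x).apply i j)

variable [Fintype ι] {f : X → Matrix ι ι ℝ}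

theorem dotProduct_mulVec_integral (hf : ∀ i j, Integrable (fun x => f x i j) μ) (v : ι → ℝ) :
    v ⬝ᵥ (of fun i j => ∫ x, f x i j ∂μ) *ᵥ v = ∫ x, v ⬝ᵥ f x *ᵥ v ∂μ := by
  have hint (i j : ι) : Integrable (fun x => v i * (f x i j * v j)) μ :=
    ((hf i j).mul_const _).const_mul _
  simp only [dotProduct, mulVec, of_apply, Finset.mul_sum]
  rw [integral_finsetSum _ fun i _ => integrable_finsetSum _ fun j _ => hint i j]
  refine Finset.sum_congr rfl fun i _ => ?_
  rw [integral_finsetSum _ fun j _ => hint i j]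
  refine Finset.sum_congr rfl fun j _ => ?_
  rw [integral_const_mul, integral_mul_const]

theorem PosSemidef.integral (hf : ∀ i j, Integrable (fun x => f x i j) μ)
    (h : ∀ x, (f x).PosSemidef) : (of fun i j => ∫ x, f x i j ∂μ).PosSemidef := by
  refine posSemidef_iff_dotProduct_mulVec.2 ⟨isHermitian_integral fun x => (h x).1, fun v => ?_⟩
  rw [star_trivial, dotProduct_mulVec_integral hf]
  exact integral_nonneg fun x => by simpa using (h x).dotProduct_mulVec_nonneg v

theorem PosDef.integral (hf : ∀ i j, Integrable (fun x => f x i j) μ)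
    (hμ : μ ≠ 0) (h : ∀ x, (f x).PosDef) : (of fun i j => ∫ x, f x i j ∂μ).PosDef := by
  refine posDef_iff_dotProduct_mulVec.2 ⟨isHermitian_integral fun x => (h x).1, fun v hv => ?_⟩
  have hpos (x : X) : 0 < v ⬝ᵥ f x *ᵥ v := by simpa using (h x).dotProduct_mulVec_pos hv
  have hint : Integrable (fun x => v ⬝ᵥ f x *ᵥ v) μ := by
    simp only [dotProduct, mulVec, Finset.mul_sum]
    exact integrable_finsetSum _ fun i _ => integrable_finsetSum _ fun j _ =>
      ((hf i j).mul_const _).const_mul _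
  rw [star_trivial, dotProduct_mulVec_integral hf,
    integral_pos_iff_support_of_nonneg (fun x => (hpos x).le) hint,
    Function.support_eq_univ fun x => (hpos x).ne']
  exact Measure.measure_univ_pos.2 hμ

end Integral

end Matrix

open Matrix NormedSpace in
/-- If `A` is Hurwitz, then for every symmetric positive semidefinite `Q` the Lyapunov
equation `AᵀP + PA + Q = 0` has a unique solution `P`, given by
`P = ∫₀^∞ exp(Aᵀt) Q exp(At) dt`; moreover `P` is symmetric positive semidefinite, and
positive definite whenever `Q` is. -/
theorem lyapunov_equation_solution {n : ℕ} (A : Matrix (Fin n) (Fin n) ℝ)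
    (hA : ∀ μ ∈ spectrum ℂ (A.map (Complex.ofReal : ℝ → ℂ)), μ.re < 0)
    (Q : Matrix (Fin n) (Fin n) ℝ) (hQ : Q.PosSemidef) :
    let P : Matrix (Fin n) (Fin n) ℝ := fun i j =>
      ∫ t in Set.Ioi (0 : ℝ), ((exp (t • Aᵀ)) * Q * (exp (t • A))) i j
    (∃! P' : Matrix (Fin n) (Fin n) ℝ, Aᵀ * P' + P' * A + Q = 0) ∧
      (Aᵀ * P + P * A + Q = 0) ∧ P.PosSemidef ∧ (Q.PosDef → P.PosDef) := by
  intro P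
  open scoped Matrix.Norms.Frobenius in
  have hstab : IsExpStable A := isExpStable_of_forall_re_neg A hA
  have hAT := hstab.transpose
  have hint := hstab.integrableOn_sylvesterFlow Q hAT
  have hentry (i j : Fin n) : IntegrableOn (fun t => sylvesterFlow A Aᵀ Q t i j) (Set.Ioi 0) :=
    (entryLinearMap ℝ ℝ i j).toContinuousLinearMap.integrable_comp hint
  have hP : P = ∫ t in Set.Ioi 0, sylvesterFlow A Aᵀ Q t := by
    ext i j
    exact (entryLinearMap ℝ ℝ i j).toContinuousLinearMap.integral_comp_comm hint
  have hsol : Aᵀ * P + P * A + Q = 0 := hP ▸ hstab.integral_sylvesterFlow_solves Q hAT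
  refine ⟨⟨P, hsol, fun P' hP' => ?_⟩, hsol, PosSemidef.integral hentry fun t => ?_,
    fun hQ' => PosDef.integral hentry ?_ fun t => ?_⟩
  · refine sub_eq_zero.1 (hstab.eq_zero_of_sylvester hAT ?_)
    calc Aᵀ * (P' - P) + (P' - P) * A = (Aᵀ * P' + P' * A + Q) - (Aᵀ * P + P * A + Q) := by
          noncomm_ring
      _ = 0 := by rw [hP', hsol, sub_zero]
  · rw [exp_smul_transpose]
    exact hQ.conjTranspose_mul_mul_same _
  · simp
  · rw [exp_smul_transpose]
    exact hQ'.conjTranspose_mul_mul_same (mulVec_injective_iff_isUnit.2 (Matrix.isUnit_exp _))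
end

section
/- Let f : ℝⁿ → ℝ be convex and L-smooth (i.e., ∇f is L-Lipschitz), g : ℝⁿ → ℝ convex, and let x^{(t+1)} = argmin_x { g(x) + (L/2)‖x - (x^{(t)} - (1/L)∇f(x^{(t)}))‖² } be the proximal gradient iteration. Then for any minimizer x* of F = f + g, F(x^{(t)}) - F(x*) ≤ L‖x^{(0)} - x*‖² / (2t) for all t ≥ 1. -/
/-!
Every proximal gradient step satisfies, for all `z`,
`F(x_{k+1}) ≤ F(z) + (L/2)(‖x_k - z‖² - ‖x_{k+1} - z‖²)`: the descent lemma bounds `f(x_{k+1})`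
by the quadratic model of `f` at `x_k`, convexity bounds the linear part of that model by `f z`,
and the optimality condition of the proximal step gives the matching inequality for `g`.
With `z = x_k` this shows that `F(x_k)` decreases; with `z = x*` the right-hand sides telescope,
so `t (F(x_t) - F(x*)) ≤ ∑_{k<t} (F(x_{k+1}) - F(x*)) ≤ (L/2)‖x_0 - x*‖²`.
-/

open Set Filter Topology
open scoped RealInnerProductSpace

theorem nonneg_of_forall_add_mul_nonneg {a C : ℝ}
    (h : ∀ s : ℝ, 0 < s → s ≤ 1 → 0 ≤ a + C * s) : 0 ≤ a := by
  have hlim : Tendsto (fun s : ℝ => a + C * s) (𝓝[>] 0) (𝓝 a) :=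
    ((by fun_prop : Continuous fun s : ℝ => a + C * s).tendsto' 0 a (by simp)).mono_left
      nhdsWithin_le_nhds
  refine ge_of_tendsto hlim ?_
  filter_upwards [Ioc_mem_nhdsGT zero_lt_one] with s hs using h s hs.1 hs.2

section InnerProductSpace

variable {E : Type*} [NormedAddCommGroup E] [InnerProductSpace ℝ E]

theorem ConvexOn.add_mul_inner_le_of_isMinOn {g : E → ℝ} (hg : ConvexOn ℝ univ g) {L : ℝ}
    {p y : E} (hp : IsMinOn (fun z => g z + L / 2 * ‖z - y‖ ^ 2) univ p) (z : E) :
    g p + L * ⟪y - p, z - p⟫ ≤ g z := by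
  suffices 0 ≤ g z - g p - L * ⟪y - p, z - p⟫ by linarith
  refine nonneg_of_forall_add_mul_nonneg (C := L / 2 * ‖z - p‖ ^ 2) fun s hs hs1 => ?_
  have hmin : g p + L / 2 * ‖p - y‖ ^ 2
      ≤ g (p + s • (z - p)) + L / 2 * ‖p + s • (z - p) - y‖ ^ 2 :=
    isMinOn_univ_iff.mp hp _
  have hconv : g (p + s • (z - p)) ≤ (1 - s) * g p + s * g z := by
    have := hg.2 (mem_univ p) (mem_univ z) (sub_nonneg.mpr hs1) hs.le (sub_add_cancel 1 s)
    rwa [show (1 - s) • p + s • z = p + s • (z - p) by module] at this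
  have hexpand : ‖p + s • (z - p) - y‖ ^ 2
      = ‖p - y‖ ^ 2 - 2 * s * ⟪y - p, z - p⟫ + s ^ 2 * ‖z - p‖ ^ 2 := by
    rw [show p + s • (z - p) - y = (p - y) + s • (z - p) by abel, norm_add_sq_real,
      inner_smul_right, norm_smul, Real.norm_of_nonneg hs.le, ← neg_sub y p, inner_neg_left]
    ring
  rw [hexpand] at hmin
  have : 0 ≤ s * (g z - g p - L * ⟪y - p, z - p⟫ + L / 2 * ‖z - p‖ ^ 2 * s) := by nlinarith
  exact nonneg_of_mul_nonneg_right (by linarith) hs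

variable [CompleteSpace E] {f : E → ℝ}

theorem HasGradientAt.hasDerivAt_comp_add_smul {f' x v : E} {s : ℝ}
    (hf : HasGradientAt f f' (x + s • v)) :
    HasDerivAt (fun s : ℝ => f (x + s • v)) ⟪f', v⟫ s := by
  have hline : HasDerivAt (fun s : ℝ => x + s • v) v s := by
    simpa using ((hasDerivAt_id s).smul_const v).const_add x
  exact (hasGradientAt_iff_hasFDerivAt.mp hf).comp_hasDerivAt s hline

theorem ConvexOn.add_inner_le_of_hasGradientAt (hconv : ConvexOn ℝ univ f) {f' x : E}
    (hf : HasGradientAt f f' x) (z : E) : f x + ⟪f', z - x⟫ ≤ f z := by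
  have hline : ConvexOn ℝ univ fun s : ℝ => f (x + s • (z - x)) := by
    simpa [Function.comp_def, AffineMap.lineMap_apply_module', add_comm]
      using hconv.comp_affineMap (AffineMap.lineMap x z)
  have hderiv := (show HasGradientAt f f' (x + (0 : ℝ) • (z - x)) by simpa using hf)
    |>.hasDerivAt_comp_add_smul
  have := hline.le_slope_of_hasDerivAt (mem_univ 0) (mem_univ 1) one_pos hderiv
  simp only [slope_def_field, one_smul, zero_smul, add_zero, add_sub_cancel, sub_zero,
    div_one] at this
  linarith

theorem apply_add_le_of_norm_gradient_sub_le (hf : Differentiable ℝ f) {L : ℝ}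
    (hsmooth : ∀ x y, ‖gradient f x - gradient f y‖ ≤ L * ‖x - y‖) (x v : E) :
    f (x + v) ≤ f x + ⟪gradient f x, v⟫ + L / 2 * ‖v‖ ^ 2 := by
  set φ : ℝ → ℝ := fun s => f (x + s • v) - s * ⟪gradient f x, v⟫ - L / 2 * ‖v‖ ^ 2 * s ^ 2
  have hφ : ∀ s,
      HasDerivAt φ (⟪gradient f (x + s • v), v⟫ - ⟪gradient f x, v⟫ - L * ‖v‖ ^ 2 * s) s :=
    fun s => by
      have hline : HasDerivAt (fun s : ℝ => f (x + s • v)) ⟪gradient f (x + s • v), v⟫ s :=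
        (hf _).hasGradientAt.hasDerivAt_comp_add_smul
      exact ((hline.sub ((hasDerivAt_id s).mul_const ⟪gradient f x, v⟫)).sub
        ((hasDerivAt_pow 2 s).const_mul (L / 2 * ‖v‖ ^ 2))).congr_deriv (by push_cast; ring)
  have hanti : AntitoneOn φ (Ici 0) := by
    refine antitoneOn_of_hasDerivWithinAt_nonpos (convex_Ici 0)
      (fun s _ => (hφ s).continuousAt.continuousWithinAt) (fun s _ => (hφ s).hasDerivWithinAt) ?_
    intro s hs
    rw [interior_Ici, mem_Ioi] at hs
    have hlip : ‖gradient f (x + s • v) - gradient f x‖ ≤ L * (s * ‖v‖) := by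
      simpa [norm_smul, abs_of_pos hs] using hsmooth (x + s • v) x
    have := real_inner_le_norm (gradient f (x + s • v) - gradient f x) v
    rw [inner_sub_left] at this
    nlinarith [norm_nonneg v]
  have := hanti (mem_Ici.mpr le_rfl) (zero_le_one' ℝ) zero_le_one
  simp only [φ, one_smul, zero_smul, add_zero, one_mul, zero_mul, sub_zero, one_pow, mul_one,
    ne_eq, OfNat.ofNat_ne_zero, not_false_eq_true, zero_pow] at this
  linarith

theorem ista_step_le (hf : Differentiable ℝ f) (hfconv : ConvexOn ℝ univ f) {L : ℝ} (hL : L ≠ 0)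
    (hsmooth : ∀ x y, ‖gradient f x - gradient f y‖ ≤ L * ‖x - y‖)
    {g : E → ℝ} (hgconv : ConvexOn ℝ univ g) {u p : E}
    (hp : IsMinOn (fun z => g z + L / 2 * ‖z - (u - (1 / L) • gradient f u)‖ ^ 2) univ p)
    (z : E) : f p + g p ≤ f z + g z + L / 2 * (‖u - z‖ ^ 2 - ‖p - z‖ ^ 2) := by
  have hdesc := apply_add_le_of_norm_gradient_sub_le hf hsmooth u (p - u)
  rw [add_sub_cancel] at hdesc
  have hconv := hfconv.add_inner_le_of_hasGradientAt (hf u).hasGradientAt z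
  have hprox := hgconv.add_mul_inner_le_of_isMinOn hp z
  have hprox_inner : L * ⟪u - (1 / L) • gradient f u - p, z - p⟫
      = L * ⟪u - p, z - p⟫ - ⟪gradient f u, z - p⟫ := by
    rw [sub_right_comm, inner_sub_left, real_inner_smul_left, mul_sub, ← mul_assoc,
      mul_one_div_cancel hL, one_mul]
  have hgrad_inner : ⟪gradient f u, p - u⟫ = ⟪gradient f u, z - u⟫ - ⟪gradient f u, z - p⟫ := by
    rw [← inner_sub_right, sub_sub_sub_cancel_left]
  have hthree_point : ‖u - z‖ ^ 2 = ‖p - u‖ ^ 2 - 2 * ⟪u - p, z - p⟫ + ‖p - z‖ ^ 2 := by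
    rw [← sub_add_sub_cancel u p z, norm_add_sq_real, norm_sub_rev u p, ← neg_sub z p,
      inner_neg_right]
    ring
  rw [hprox_inner] at hprox
  rw [hthree_point]
  linarith

end InnerProductSpace

theorem mul_sub_le_of_antitone_of_le_sub {F D : ℕ → ℝ} {c : ℝ} (hF : Antitone F)
    (hD : ∀ k, 0 ≤ D k) (hstep : ∀ k, F (k + 1) - c ≤ D k - D (k + 1)) (t : ℕ) :
    t * (F t - c) ≤ D 0 := by
  have hsum : ∑ k ∈ Finset.range t, (F (k + 1) - c) ≤ D 0 - D t := by
    rw [← Finset.sum_range_sub']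
    exact Finset.sum_le_sum fun k _ => hstep k
  have hlast : ∀ k ∈ Finset.range t, F t - c ≤ F (k + 1) - c := fun k hk =>
    sub_le_sub_right (hF (Finset.mem_range.mp hk)) c
  have := Finset.card_nsmul_le_sum _ _ _ hlast
  rw [Finset.card_range, nsmul_eq_mul] at this
  linarith [hD t]

theorem ista_convergence_rate_general {n : ℕ}
    (f g : EuclideanSpace ℝ (Fin n) → ℝ)
    (L : ℝ) (hL : 0 < L)
    (hf : Differentiable ℝ f) (hfconv : ConvexOn ℝ Set.univ f)
    (hsmooth : ∀ x y, ‖gradient f x - gradient f y‖ ≤ L * ‖x - y‖)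
    (hgconv : ConvexOn ℝ Set.univ g)
    (x : ℕ → EuclideanSpace ℝ (Fin n))
    (hiter : ∀ t, ∀ z,
      g (x (t + 1)) + (L / 2) * ‖x (t + 1) - (x t - (1 / L) • gradient f (x t))‖ ^ 2 ≤
        g z + (L / 2) * ‖z - (x t - (1 / L) • gradient f (x t))‖ ^ 2)
    (xstar : EuclideanSpace ℝ (Fin n)) :
    ∀ t : ℕ, 1 ≤ t →
      (f (x t) + g (x t)) - (f xstar + g xstar) ≤ L * ‖x 0 - xstar‖ ^ 2 / (2 * t) := by
  intro t ht
  have hstep : ∀ k z, f (x (k + 1)) + g (x (k + 1))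
      ≤ f z + g z + L / 2 * (‖x k - z‖ ^ 2 - ‖x (k + 1) - z‖ ^ 2) := fun k =>
    ista_step_le hf hfconv hL.ne' hsmooth hgconv (isMinOn_univ_iff.mpr (hiter k))
  have hdecreasing : Antitone fun k => f (x k) + g (x k) :=
    antitone_nat_of_succ_le fun k => by
      have h := hstep k (x k)
      rw [sub_self, norm_zero] at h
      have : 0 ≤ L / 2 * ‖x (k + 1) - x k‖ ^ 2 := by positivity
      linarith
  have hbound := mul_sub_le_of_antitone_of_le_sub (c := f xstar + g xstar) hdecreasing
    (fun k => by positivity : ∀ k, 0 ≤ L / 2 * ‖x k - xstar‖ ^ 2)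
    (fun k => by linarith [hstep k xstar]) t
  rw [le_div_iff₀ (by positivity)]
  linarith

/-- O(1/t) convergence of ISTA (Beck–Teboulle, Thm 3.1): for convex `L`-smooth `f`,
convex `g`, and the proximal gradient iteration
`x^{t+1} = argmin_z { g(z) + (L/2)‖z - (x^t - (1/L)∇f(x^t))‖² }`, any minimizer `x*` of
`F = f + g` satisfies `F(x^t) - F(x*) ≤ L‖x⁰ - x*‖²/(2t)` for all `t ≥ 1`. -/
theorem ista_convergence_rate {n : ℕ}
    (f g : EuclideanSpace ℝ (Fin n) → ℝ)
    (L : ℝ) (hL : 0 < L)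
    (hf : Differentiable ℝ f) (hfconv : ConvexOn ℝ Set.univ f)
    (hsmooth : ∀ x y, ‖gradient f x - gradient f y‖ ≤ L * ‖x - y‖)
    (hgconv : ConvexOn ℝ Set.univ g)
    (x : ℕ → EuclideanSpace ℝ (Fin n))
    (hiter : ∀ t, ∀ z,
      g (x (t + 1)) + (L / 2) * ‖x (t + 1) - (x t - (1 / L) • gradient f (x t))‖ ^ 2 ≤
        g z + (L / 2) * ‖z - (x t - (1 / L) • gradient f (x t))‖ ^ 2)
    (xstar : EuclideanSpace ℝ (Fin n))
    (hstar : ∀ z, f xstar + g xstar ≤ f z + g z) :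
    ∀ t : ℕ, 1 ≤ t →
      (f (x t) + g (x t)) - (f xstar + g xstar) ≤ L * ‖x 0 - xstar‖ ^ 2 / (2 * t) :=
  ista_convergence_rate_general f g L hL hf hfconv hsmooth hgconv x hiter xstar
end

section
/- Let x ∈ ℝⁿ with entries sorted in descending magnitude |x_{(1)}| ≥ ... ≥ |x_{(n)}|, and suppose ‖x‖₁ > s > 0. Define M = max{ j : |x_{(j)}| - (1/j)(∑_{i=1}^j |x_{(i)}| - s) > 0 } and λ = (1/M)(∑_{i=1}^M |x_{(i)}| - s). Then λ > 0, and for every j ≤ M we have |x_{(j)}| > λ, while for every j > M we have |x_{(j)}| ≤ λ; consequently the soft-thresholded vector z_i = sgn(x_i)·max(|x_i| - λ, 0) has exactly M nonzero entries. -/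
/-!
Write `λ_m = (∑_{i<m} |x_i| - s) / m`. The defining condition of `M` at index `m + 1` says exactly
that `|x_m| > λ_m`, so maximality of `M` gives `|x_M| ≤ λ`, and sorting extends this to the whole
tail. Then `‖x‖₁ - s ≤ M λ + (n - M) λ = n λ`, which forces `λ > 0`; the head entries exceed `λ`
because `|x_{M-1}| > λ` is the condition at `M` itself.
-/

open Finset

theorem one_div_mul_sub_lt_iff_succ {m : ℝ} (hm : 0 < m) (S s a : ℝ) :
    1 / m * (S - s) < a ↔ 0 < a - 1 / (m + 1) * (S + a - s) := by
  rw [one_div_mul_eq_div, div_lt_iff₀ hm, one_div_mul_eq_div, sub_pos,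
    div_lt_iff₀ (by positivity)]
  constructor <;> intro h <;> linarith

theorem Real.sign_mul_max_sub_ne_zero_iff {lam : ℝ} (hlam : 0 ≤ lam) (t : ℝ) :
    Real.sign t * max (|t| - lam) 0 ≠ 0 ↔ lam < |t| := by
  constructor
  · intro h
    by_contra! ht
    exact h (by rw [max_eq_right (by linarith), mul_zero])
  · intro ht
    have hsign : Real.sign t ≠ 0 := by
      rw [Ne, Real.sign_eq_zero_iff]
      rintro rfl
      simp only [abs_zero] at ht
      linarith
    exact mul_ne_zero hsign (by rw [max_eq_left (by linarith)]; linarith)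

theorem sum_range_le_add_mul_of_le {f : ℕ → ℝ} {m n : ℕ} {c : ℝ} (hmn : m ≤ n)
    (hf : ∀ i, m ≤ i → i < n → f i ≤ c) :
    ∑ i ∈ range n, f i ≤ ∑ i ∈ range m, f i + (n - m) * c := by
  rw [← sum_range_add_sum_Ico f hmn]
  gcongr
  calc ∑ i ∈ Ico m n, f i ≤ #(Ico m n) • c :=
        sum_le_card_nsmul _ _ _ fun i hi => hf i (mem_Ico.1 hi).1 (mem_Ico.1 hi).2
    _ = (n - m) * c := by rw [Nat.card_Ico, nsmul_eq_mul, Nat.cast_sub hmn]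

open Finset in
theorem duchi_threshold_lemma_general {n : ℕ} (x : ℕ → ℝ) (s : ℝ)
    (hsorted : ∀ i j, i ≤ j → j < n → |x j| ≤ |x i|)
    (hsum : s < ∑ i ∈ range n, |x i|)
    (M : ℕ) (hM1 : 1 ≤ M) (hMn : M ≤ n)
    (hMcond : |x (M - 1)| - (1 / (M : ℝ)) * ((∑ i ∈ range M, |x i|) - s) > 0)
    (hMmax : ∀ j, 1 ≤ j → j ≤ n →
      |x (j - 1)| - (1 / (j : ℝ)) * ((∑ i ∈ range j, |x i|) - s) > 0 → j ≤ M)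
    (lam : ℝ) (hlam : lam = (1 / (M : ℝ)) * ((∑ i ∈ range M, |x i|) - s))
    (z : ℕ → ℝ) (hz : ∀ i, z i = Real.sign (x i) * max (|x i| - lam) 0) :
    0 < lam ∧
      (∀ j, 1 ≤ j → j ≤ M → lam < |x (j - 1)|) ∧
      (∀ j, M < j → j ≤ n → |x (j - 1)| ≤ lam) ∧
      ((range n).filter fun i => z i ≠ 0).card = M := by
  have hM : (0 : ℝ) < M := by exact_mod_cast hM1
  have head : ∀ i < M, lam < |x i| := fun i hi => by
    have := hsorted i (M - 1) (by omega) (by omega)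
    rw [hlam]
    linarith
  have tail : ∀ i, M ≤ i → i < n → |x i| ≤ lam := by
    intro i hMi hin
    have hxM : ¬ lam < |x M| := by
      rw [hlam, one_div_mul_sub_lt_iff_succ hM]
      intro h
      have := hMmax (M + 1) (by omega) (by omega) (by simpa [sum_range_succ] using h)
      omega
    exact (hsorted M i hMi hin).trans (not_lt.1 hxM)
  have hpos : 0 < lam := by
    have hscale : (M : ℝ) * lam = ∑ i ∈ range M, |x i| - s := by
      rw [hlam]
      field_simp
    have hbound := sum_range_le_add_mul_of_le hMn tail
    exact pos_of_mul_pos_right (a := (n : ℝ)) (by linarith) (Nat.cast_nonneg n)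
  have support : ((range n).filter fun i => z i ≠ 0) = range M := by
    ext i
    simp only [mem_filter, mem_range, hz, Real.sign_mul_max_sub_ne_zero_iff hpos.le]
    constructor
    · rintro ⟨hin, hi⟩
      by_contra! hMi
      exact (tail i hMi hin).not_gt hi
    · exact fun hi => ⟨by omega, head i hi⟩
  exact ⟨hpos, fun j _ _ => head _ (by omega), fun j _ _ => tail _ (by omega) (by omega),
    by rw [support, card_range]⟩

open Finset in
/-- Lemma 2 of Duchi et al. 2008: for `x` sorted in descending magnitude with
`‖x‖₁ > s > 0`, setting `M = max{ j : |x_j| - (1/j)(∑_{i≤j}|x_i| - s) > 0 }` and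
`λ = (1/M)(∑_{i≤M}|x_i| - s)`, we have `λ > 0`, `|x_j| > λ` for `j ≤ M`, `|x_j| ≤ λ`
for `j > M`, and the soft-thresholded vector has exactly `M` nonzero entries. -/
theorem duchi_threshold_lemma {n : ℕ} (x : ℕ → ℝ) (s : ℝ) (hs : 0 < s)
    (hsorted : ∀ i j, i ≤ j → j < n → |x j| ≤ |x i|)
    (hsum : s < ∑ i ∈ range n, |x i|)
    (M : ℕ) (hM1 : 1 ≤ M) (hMn : M ≤ n)
    (hMcond : |x (M - 1)| - (1 / (M : ℝ)) * ((∑ i ∈ range M, |x i|) - s) > 0)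
    (hMmax : ∀ j, 1 ≤ j → j ≤ n →
      |x (j - 1)| - (1 / (j : ℝ)) * ((∑ i ∈ range j, |x i|) - s) > 0 → j ≤ M)
    (lam : ℝ) (hlam : lam = (1 / (M : ℝ)) * ((∑ i ∈ range M, |x i|) - s))
    (z : ℕ → ℝ) (hz : ∀ i, z i = Real.sign (x i) * max (|x i| - lam) 0) :
    0 < lam ∧
      (∀ j, 1 ≤ j → j ≤ M → lam < |x (j - 1)|) ∧
      (∀ j, M < j → j ≤ n → |x (j - 1)| ≤ lam) ∧
      ((range n).filter fun i => z i ≠ 0).card = M :=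
  duchi_threshold_lemma_general x s hsorted hsum M hM1 hMn hMcond hMmax lam hlam z hz
end

section
/- The projection of K° onto the block-sparsity ball {K : ∑_{i,j} ‖K_{i,j}‖_F ≤ s}, when ∑_{i,j}‖K°_{i,j}‖_F > s and all blocks are nonzero, is given blockwise by P(K°)_{i,j} = max(‖K°_{i,j}‖_F - λ, 0)·K°_{i,j}/‖K°_{i,j}‖_F, where λ is the threshold from the simplex projection of the vector of block norms (‖K°_{i,j}‖_F) onto {t ≥ 0 : ∑ t ≤ s}; i.e., this blockwise soft-thresholding minimizes (1/2)‖K - K°‖_F² subject to ∑_{i,j}‖K_{i,j}‖_F ≤ s. -/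
/-!
Each block is handled separately by the one-dimensional soft-thresholding inequality: with
`a = ‖x‖`, `b = ‖k‖` and `t = max (a - λ) 0`, one has `(a - t)² + 2λ (t - b) ≤ (b - a)²`, and
`(b - a)² ≤ ‖k - x‖²` by the reverse triangle inequality. Summing over the blocks, the extra
term `2λ (∑ t - ∑ ‖k‖) = 2λ (s - ∑ ‖k‖)` is nonnegative on the ball, so the thresholded point
is at least as close to `K°` as any competitor. This is the KKT argument of the paper with the
multiplier `λ` made explicit, and it works in any real normed space.
-/

open Finset

theorem Real.min_sq_add_le_sub_sq {a b lam : ℝ} (hb : 0 ≤ b) :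
    min a lam ^ 2 + 2 * lam * (max (a - lam) 0 - b) ≤ (b - a) ^ 2 := by
  rcases le_total a lam with h | h
  · rw [min_eq_left h, max_eq_right (by linarith)]
    nlinarith [mul_nonneg hb (sub_nonneg.mpr h)]
  · rw [min_eq_right h, max_eq_left (by linarith)]
    nlinarith [sq_nonneg (a - b - lam)]

section SoftThreshold

variable {E : Type*} [SeminormedAddCommGroup E]

theorem sq_sub_norm_le_norm_sub_sq (x k : E) : (‖k‖ - ‖x‖) ^ 2 ≤ ‖k - x‖ ^ 2 :=
  sq_le_sq.mpr ((abs_norm_sub_norm_le k x).trans (le_abs_self _))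

variable [NormedSpace ℝ E]

-- For `‖x‖ = 0` the junk value `t / 0 = 0` gives `0`, which is the correct threshold there too.
noncomputable def softThreshold (lam : ℝ) (x : E) : E :=
  (max (‖x‖ - lam) 0 / ‖x‖) • x

variable {lam : ℝ}

theorem norm_softThreshold (hlam : 0 ≤ lam) (x : E) :
    ‖softThreshold lam x‖ = max (‖x‖ - lam) 0 := by
  rcases (norm_nonneg x).eq_or_lt with hx | hx
  · simp [softThreshold, ← hx, hlam]
  · rw [softThreshold, norm_smul, Real.norm_of_nonneg (by positivity),
      div_mul_cancel₀ _ hx.ne']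

theorem norm_softThreshold_sub (hlam : 0 ≤ lam) (x : E) :
    ‖softThreshold lam x - x‖ = min ‖x‖ lam := by
  rcases (norm_nonneg x).eq_or_lt with hx | hx
  · simp [softThreshold, ← hx, hlam]
  · have hratio : max (‖x‖ - lam) 0 / ‖x‖ ≤ 1 :=
      (div_le_one hx).mpr (max_le (by linarith) hx.le)
    have hsub : softThreshold lam x - x = (max (‖x‖ - lam) 0 / ‖x‖ - 1) • x := by
      rw [softThreshold, sub_smul, one_smul]
    rw [hsub, norm_smul, Real.norm_of_nonpos (by linarith), neg_sub,
      sub_mul, one_mul, div_mul_cancel₀ _ hx.ne']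
    rcases le_total ‖x‖ lam with h | h
    · rw [max_eq_right (by linarith), min_eq_left h, sub_zero]
    · rw [max_eq_left (by linarith), min_eq_right h, sub_sub_cancel]

theorem norm_softThreshold_sub_sq_add_le (hlam : 0 ≤ lam) (x k : E) :
    ‖softThreshold lam x - x‖ ^ 2 + 2 * lam * (‖softThreshold lam x‖ - ‖k‖) ≤ ‖k - x‖ ^ 2 := by
  rw [norm_softThreshold_sub hlam, norm_softThreshold hlam]
  exact (Real.min_sq_add_le_sub_sq (norm_nonneg k)).trans (sq_sub_norm_le_norm_sub_sq x k)

theorem sum_norm_softThreshold_sub_sq_le {ι : Type*} (S : Finset ι) (hlam : 0 ≤ lam)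
    (x k : ι → E) (hk : ∑ i ∈ S, ‖k i‖ ≤ ∑ i ∈ S, ‖softThreshold lam (x i)‖) :
    ∑ i ∈ S, ‖softThreshold lam (x i) - x i‖ ^ 2 ≤ ∑ i ∈ S, ‖k i - x i‖ ^ 2 := by
  have hgap : 0 ≤ 2 * lam * (∑ i ∈ S, ‖softThreshold lam (x i)‖ - ∑ i ∈ S, ‖k i‖) :=
    mul_nonneg (by linarith) (sub_nonneg.mpr hk)
  calc ∑ i ∈ S, ‖softThreshold lam (x i) - x i‖ ^ 2
      ≤ ∑ i ∈ S, (‖softThreshold lam (x i) - x i‖ ^ 2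
          + 2 * lam * (‖softThreshold lam (x i)‖ - ‖k i‖)) := by
        rw [sum_add_distrib, ← mul_sum, sum_sub_distrib]
        linarith
    _ ≤ ∑ i ∈ S, ‖k i - x i‖ ^ 2 :=
        sum_le_sum fun i _ => norm_softThreshold_sub_sq_add_le hlam (x i) (k i)

end SoftThreshold

attribute [local instance] Matrix.frobeniusSeminormedAddCommGroup Matrix.frobeniusNormedSpace

theorem Matrix.frobenius_norm_eq_sqrt {m n : Type*} [Fintype m] [Fintype n]
    (M : Matrix m n ℝ) : ‖M‖ = Real.sqrt (∑ a, ∑ b, (M a b) ^ 2) := by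
  simp only [Matrix.frobenius_norm_def, Real.sqrt_eq_rpow, Real.norm_eq_abs, Real.rpow_two,
    sq_abs]

theorem block_sparsity_projection_general {I J : Type*} [Fintype I] [Fintype J] {p q : ℕ}
    (Ko : I → J → Matrix (Fin p) (Fin q) ℝ) (s : ℝ)
    (frob : Matrix (Fin p) (Fin q) ℝ → ℝ)
    (hfrob : ∀ M, frob M = Real.sqrt (∑ a, ∑ b, (M a b) ^ 2))
    (lam : ℝ) (hlam_pos : 0 < lam)
    (hlam : (∑ i, ∑ j, max (frob (Ko i j) - lam) 0) = s)
    (P : I → J → Matrix (Fin p) (Fin q) ℝ)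
    (hP : ∀ i j, P i j = (max (frob (Ko i j) - lam) 0 / frob (Ko i j)) • Ko i j) :
    (∑ i, ∑ j, frob (P i j)) ≤ s ∧
      ∀ K : I → J → Matrix (Fin p) (Fin q) ℝ, (∑ i, ∑ j, frob (K i j)) ≤ s →
        ((1 : ℝ) / 2) * (∑ i, ∑ j, (frob (P i j - Ko i j)) ^ 2) ≤
          ((1 : ℝ) / 2) * ∑ i, ∑ j, (frob (K i j - Ko i j)) ^ 2 := by
  obtain rfl : frob = (‖·‖) := funext fun M => (hfrob M).trans M.frobenius_norm_eq_sqrt.symm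
  obtain rfl : P = fun i j => softThreshold lam (Ko i j) := funext₂ hP
  have hP_norm : ∑ i, ∑ j, ‖softThreshold lam (Ko i j)‖ = s := by
    simp only [norm_softThreshold hlam_pos.le, hlam]
  refine ⟨hP_norm.le, fun K hK => mul_le_mul_of_nonneg_left ?_ (by norm_num)⟩
  have hopt := sum_norm_softThreshold_sub_sq_le (univ : Finset (I × J)) hlam_pos.le
    (fun ij => Ko ij.1 ij.2) (fun ij => K ij.1 ij.2)
  simp only [Fintype.sum_prod_type] at hopt
  exact hopt (hK.trans hP_norm.ge)

/-- Projection onto the block-sparsity ball `{K : ∑_{i,j} ‖K_{i,j}‖_F ≤ s}`: with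
`λ > 0` chosen so that `∑_{i,j} max (‖K°_{i,j}‖_F - λ) 0 = s`, blockwise soft
thresholding `P(K°)_{i,j} = max (‖K°_{i,j}‖_F - λ) 0 • K°_{i,j}/‖K°_{i,j}‖_F`
minimizes `(1/2)‖K - K°‖_F²` subject to `∑_{i,j} ‖K_{i,j}‖_F ≤ s`. -/
theorem block_sparsity_projection {I J : Type*} [Fintype I] [Fintype J] {p q : ℕ}
    (Ko : I → J → Matrix (Fin p) (Fin q) ℝ) (s : ℝ) (hs : 0 < s)
    (frob : Matrix (Fin p) (Fin q) ℝ → ℝ)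
    (hfrob : ∀ M, frob M = Real.sqrt (∑ a, ∑ b, (M a b) ^ 2))
    (hKo_ne : ∀ i j, Ko i j ≠ 0)
    (hKo_sum : s < ∑ i, ∑ j, frob (Ko i j))
    (lam : ℝ) (hlam_pos : 0 < lam)
    (hlam : (∑ i, ∑ j, max (frob (Ko i j) - lam) 0) = s)
    (P : I → J → Matrix (Fin p) (Fin q) ℝ)
    (hP : ∀ i j, P i j = (max (frob (Ko i j) - lam) 0 / frob (Ko i j)) • Ko i j) :
    (∑ i, ∑ j, frob (P i j)) ≤ s ∧
      ∀ K : I → J → Matrix (Fin p) (Fin q) ℝ, (∑ i, ∑ j, frob (K i j)) ≤ s →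
        ((1 : ℝ) / 2) * (∑ i, ∑ j, (frob (P i j - Ko i j)) ^ 2) ≤
          ((1 : ℝ) / 2) * ∑ i, ∑ j, (frob (K i j - Ko i j)) ^ 2 :=
  block_sparsity_projection_general Ko s frob hfrob lam hlam_pos hlam P hP
end
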